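/- For any pairwise distinct i, j, k, l ∈ {1,…,8}, the compositions of ℤ-linear endomorphisms of L_Y satisfy K_{i,j} ∘ s₂ ∘ K_{k,l} ∘ s₁ = K_{i,j} ∘ s₁ ∘ K_{k,l} ∘ s₂, and this common composition equals the Kac translation T_{H₁+H₂−Eᵢ−Eⱼ−Eₖ−Eₗ}. -/

import Mathlib

open Finset

/-- `L_Y`: the free ℤ-module with basis `H₁, H₂, E₁, …, E₈`; index `0` is `H₁`,
index `1` is `H₂`, and index `i+1` is `Eᵢ` for `i = 1,…,8`. -/
abbrev LY : Type := Fin 10 → ℤ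

noncomputable def basisY : Module.Basis (Fin 10) ℤ LY := Pi.basisFun ℤ (Fin 10)

/-- The basis vectors of `L_Y`: `bY 0 = H₁`, `bY 1 = H₂`, `bY (i+1) = Eᵢ` for `i = 1,…,8`. -/
noncomputable def bY (a : Fin 10) : LY := basisY a

/-- The symmetric bilinear form on `L_Y` with `⟨H₁,H₂⟩ = 1`, `⟨H₁,H₁⟩ = ⟨H₂,H₂⟩ = 0`,
`⟨Eᵢ,Eᵢ⟩ = -1`, and all other products of distinct basis vectors `0`. -/
noncomputable def formY : LY →ₗ[ℤ] LY →ₗ[ℤ] ℤ :=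
  Matrix.toLinearMap₂' ℤ (Matrix.of (fun a b : Fin 10 =>
    if (a = 0 ∧ b = 1) ∨ (a = 1 ∧ b = 0) then (1 : ℤ)
    else if a = b ∧ a ≠ 0 ∧ a ≠ 1 then -1 else 0))

/-- The anticanonical class `δ = 2H₁ + 2H₂ - E₁ - ⋯ - E₈`. -/
noncomputable def deltaY : LY :=
  (2 : ℤ) • bY 0 + (2 : ℤ) • bY 1 - ∑ k ∈ ({0, 1} : Finset (Fin 10))ᶜ, bY k

/-- The Kac translation `T_α(λ) = λ + ⟨δ,λ⟩α + (⟨δ,λ⟩ - ⟨α,λ⟩)δ` on `L_Y`. -/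
noncomputable def kacY (α : LY) : LY →ₗ[ℤ] LY :=
  LinearMap.id + (formY deltaY).smulRight α + (formY deltaY - formY α).smulRight deltaY

/-- The vertical switch action `s₁` on `L_Y`: `s₁(H₁) = H₁`,
`s₁(H₂) = 4H₁ + H₂ - Σₖ Eₖ`, `s₁(Eⱼ) = H₁ - Eⱼ`. -/
noncomputable def sw1 : LY →ₗ[ℤ] LY :=
  basisY.constr ℤ (fun a =>
    if a = 0 then bY 0
    else if a = 1 then
      (4 : ℤ) • bY 0 + bY 1 - ∑ k ∈ ({0, 1} : Finset (Fin 10))ᶜ, bY k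
    else bY 0 - bY a)

/-- The horizontal switch action `s₂` on `L_Y`: `s₂(H₁) = H₁ + 4H₂ - Σₖ Eₖ`,
`s₂(H₂) = H₂`, `s₂(Eⱼ) = H₂ - Eⱼ`. -/
noncomputable def sw2 : LY →ₗ[ℤ] LY :=
  basisY.constr ℤ (fun a =>
    if a = 0 then
      bY 0 + (4 : ℤ) • bY 1 - ∑ k ∈ ({0, 1} : Finset (Fin 10))ᶜ, bY k
    else if a = 1 then bY 1
    else bY 1 - bY a)

/-- The involution action `K_{i,j}` on `L_Y` (for distinct `i, j ∈ {1,…,8}`, here encoded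
by distinct indices `i, j ∉ {0, 1}` of `Fin 10`):
`K(H₁) = 3H₁ + 4H₂ - 3(Eᵢ+Eⱼ) - Σ'Eₖ`, `K(H₂) = 4H₁ + 3H₂ - 3(Eᵢ+Eⱼ) - Σ'Eₖ`,
`K(Eᵢ) = 3H₁ + 3H₂ - 3Eᵢ - 2Eⱼ - Σ'Eₖ`, `K(Eⱼ) = 3H₁ + 3H₂ - 2Eᵢ - 3Eⱼ - Σ'Eₖ`,
`K(Eₖ) = H₁ + H₂ - Eᵢ - Eⱼ - Eₖ` for `k ∉ {i,j}`, where `Σ'` sums over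
`k ∈ {1,…,8} \ {i,j}`. -/
noncomputable def KY (i j : Fin 10) : LY →ₗ[ℤ] LY :=
  basisY.constr ℤ (fun a =>
    if a = 0 then
      (3 : ℤ) • bY 0 + (4 : ℤ) • bY 1 - (3 : ℤ) • (bY i + bY j)
        - ∑ k ∈ ({0, 1, i, j} : Finset (Fin 10))ᶜ, bY k
    else if a = 1 then
      (4 : ℤ) • bY 0 + (3 : ℤ) • bY 1 - (3 : ℤ) • (bY i + bY j)
        - ∑ k ∈ ({0, 1, i, j} : Finset (Fin 10))ᶜ, bY k
    else if a = i then
      (3 : ℤ) • bY 0 + (3 : ℤ) • bY 1 - (3 : ℤ) • bY i - (2 : ℤ) • bY j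
        - ∑ k ∈ ({0, 1, i, j} : Finset (Fin 10))ᶜ, bY k
    else if a = j then
      (3 : ℤ) • bY 0 + (3 : ℤ) • bY 1 - (2 : ℤ) • bY i - (3 : ℤ) • bY j
        - ∑ k ∈ ({0, 1, i, j} : Finset (Fin 10))ᶜ, bY k
    else bY 0 + bY 1 - bY i - bY j - bY a)


section Helpers

lemma constr_eval (f : Fin 10 → LY) (v : LY) (b : Fin 10) :
    basisY.constr ℤ f v b = ∑ a, v a * f a b := by
  simp [basisY, Module.Basis.constr_apply_fintype, Pi.basisFun_equivFun]

lemma bY_apply (c b : Fin 10) : bY c b = if b = c then 1 else 0 := by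
  simp [bY, basisY, Pi.basisFun_apply, Pi.single_apply]

lemma sum_compl_eval (s : Finset (Fin 10)) (b : Fin 10) :
    (∑ k ∈ sᶜ, bY k) b = if b ∈ s then 0 else 1 := by
  rw [Finset.sum_apply]
  simp only [bY_apply]
  rw [Finset.sum_ite_eq sᶜ b (fun _ => (1:ℤ))]
  simp

/-- The sum of the coordinates over `E`-indices. -/
def Sv (v : LY) : ℤ := ∑ a ∈ ({0, 1} : Finset (Fin 10))ᶜ, v a

lemma sum_mul_ite (s : Finset (Fin 10)) (v : LY) (b : Fin 10) :
    ∑ a ∈ s, v a * (if b = a then (1:ℤ) else 0) = if b ∈ s then v b else 0 := by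
  simp only [mul_ite, mul_one, mul_zero]
  exact Finset.sum_ite_eq s b v

lemma sw1_apply (v : LY) (b : Fin 10) :
    sw1 v b = if b = 0 then v 0 + 4 * v 1 + Sv v else if b = 1 then v 1 else -v 1 - v b := by
  have hc : ∀ a ∈ ({0,1} : Finset (Fin 10))ᶜ,
      v a * ((if a = 0 then bY 0 else if a = 1 then
        (4 : ℤ) • bY 0 + bY 1 - ∑ k ∈ ({0, 1} : Finset (Fin 10))ᶜ, bY k
        else bY 0 - bY a) b)
        = v a * ((if b = 0 then (1:ℤ) else 0) - if b = a then 1 else 0) := by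
    intro a ha
    simp only [Finset.mem_compl, Finset.mem_insert, Finset.mem_singleton, not_or] at ha
    rw [if_neg ha.1, if_neg ha.2, Pi.sub_apply, bY_apply, bY_apply]
  rw [sw1, constr_eval, ← Finset.sum_add_sum_compl ({0,1} : Finset (Fin 10)),
    Finset.sum_pair (by decide : (0:Fin 10) ≠ 1), Finset.sum_congr rfl hc]
  simp only [mul_sub, Finset.sum_sub_distrib, sum_mul_ite, ← Finset.sum_mul,
    if_pos rfl, if_neg (by decide : ¬ (0:Fin 10) = 1), if_neg (by decide : ¬ (1:Fin 10) = 0)]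
  have hS : ∑ a ∈ ({0,1} : Finset (Fin 10))ᶜ, v a = Sv v := rfl
  rw [hS]
  rcases eq_or_ne b 0 with rfl | hb0
  · simp [Pi.add_apply, Pi.sub_apply, bY_apply, sum_compl_eval]; try ring
  rcases eq_or_ne b 1 with rfl | hb1
  · simp [Pi.add_apply, Pi.sub_apply, bY_apply, sum_compl_eval]; try ring
  · have hbc : b ∈ ({0,1} : Finset (Fin 10))ᶜ := by simp [hb0, hb1]
    simp [Pi.add_apply, Pi.sub_apply, bY_apply, sum_compl_eval, hb0, hb1, hbc]
    try ring

lemma sw2_apply (v : LY) (b : Fin 10) :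
    sw2 v b = if b = 0 then v 0 else if b = 1 then 4 * v 0 + v 1 + Sv v else -v 0 - v b := by
  have hc : ∀ a ∈ ({0,1} : Finset (Fin 10))ᶜ,
      v a * ((if a = 0 then
        bY 0 + (4 : ℤ) • bY 1 - ∑ k ∈ ({0, 1} : Finset (Fin 10))ᶜ, bY k
        else if a = 1 then bY 1
        else bY 1 - bY a) b)
        = v a * ((if b = 1 then (1:ℤ) else 0) - if b = a then 1 else 0) := by
    intro a ha
    simp only [Finset.mem_compl, Finset.mem_insert, Finset.mem_singleton, not_or] at ha
    rw [if_neg ha.1, if_neg ha.2, Pi.sub_apply, bY_apply, bY_apply]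
  rw [sw2, constr_eval, ← Finset.sum_add_sum_compl ({0,1} : Finset (Fin 10)),
    Finset.sum_pair (by decide : (0:Fin 10) ≠ 1), Finset.sum_congr rfl hc]
  simp only [mul_sub, Finset.sum_sub_distrib, sum_mul_ite, ← Finset.sum_mul,
    if_pos rfl, if_neg (by decide : ¬ (0:Fin 10) = 1), if_neg (by decide : ¬ (1:Fin 10) = 0)]
  have hS : ∑ a ∈ ({0,1} : Finset (Fin 10))ᶜ, v a = Sv v := rfl
  rw [hS]
  rcases eq_or_ne b 0 with rfl | hb0
  · simp [Pi.add_apply, Pi.sub_apply, bY_apply, sum_compl_eval]; try ring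
  rcases eq_or_ne b 1 with rfl | hb1
  · simp [Pi.add_apply, Pi.sub_apply, bY_apply, sum_compl_eval]; try ring
  · have hbc : b ∈ ({0,1} : Finset (Fin 10))ᶜ := by simp [hb0, hb1]
    simp [Pi.add_apply, Pi.sub_apply, bY_apply, sum_compl_eval, hb0, hb1, hbc]
    try ring

lemma Sv_sw1 (v : LY) : Sv (sw1 v) = -8 * v 1 - Sv v := by
  have hcard : (({0,1} : Finset (Fin 10))ᶜ).card = 8 := by decide
  have hc : ∀ a ∈ ({0,1} : Finset (Fin 10))ᶜ, sw1 v a = -v 1 - v a := by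
    intro a ha
    simp only [Finset.mem_compl, Finset.mem_insert, Finset.mem_singleton, not_or] at ha
    rw [sw1_apply, if_neg ha.1, if_neg ha.2]
  rw [show Sv (sw1 v) = ∑ a ∈ ({0,1} : Finset (Fin 10))ᶜ, sw1 v a from rfl,
    Finset.sum_congr rfl hc, Finset.sum_sub_distrib, Finset.sum_const, hcard]
  have hS : ∑ a ∈ ({0,1} : Finset (Fin 10))ᶜ, v a = Sv v := rfl
  rw [hS]
  push_cast
  ring

lemma Sv_sw2 (v : LY) : Sv (sw2 v) = -8 * v 0 - Sv v := by
  have hcard : (({0,1} : Finset (Fin 10))ᶜ).card = 8 := by decide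
  have hc : ∀ a ∈ ({0,1} : Finset (Fin 10))ᶜ, sw2 v a = -v 0 - v a := by
    intro a ha
    simp only [Finset.mem_compl, Finset.mem_insert, Finset.mem_singleton, not_or] at ha
    rw [sw2_apply, if_neg ha.1, if_neg ha.2]
  rw [show Sv (sw2 v) = ∑ a ∈ ({0,1} : Finset (Fin 10))ᶜ, sw2 v a from rfl,
    Finset.sum_congr rfl hc, Finset.sum_sub_distrib, Finset.sum_const, hcard]
  have hS : ∑ a ∈ ({0,1} : Finset (Fin 10))ᶜ, v a = Sv v := rfl
  rw [hS]
  push_cast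
  ring

section KYlemmas
variable {i j : Fin 10} (hi0 : i ≠ 0) (hi1 : i ≠ 1) (hj0 : j ≠ 0) (hj1 : j ≠ 1) (hij : i ≠ j)
include hi0 hi1 hj0 hj1 hij

omit hi0 hi1 hj0 hj1 hij in
lemma compl4_eq :
    ({0, 1, i, j} : Finset (Fin 10))ᶜ = ({0, 1} : Finset (Fin 10))ᶜ \ {i, j} := by
  ext x
  simp only [Finset.mem_compl, Finset.mem_insert, Finset.mem_singleton, Finset.mem_sdiff,
    not_or]
  tauto

lemma sum_compl4 (v : LY) :
    ∑ a ∈ ({0, 1, i, j} : Finset (Fin 10))ᶜ, v a = Sv v - v i - v j := by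
  have hsub : ({i, j} : Finset (Fin 10)) ⊆ ({0, 1} : Finset (Fin 10))ᶜ := by
    intro x hx
    simp only [Finset.mem_insert, Finset.mem_singleton] at hx
    rcases hx with rfl | rfl <;> simp [hi0, hi1, hj0, hj1]
  rw [compl4_eq]
  have h := Finset.sum_sdiff (f := v) hsub
  rw [Finset.sum_pair hij] at h
  have hS : Sv v = ∑ a ∈ ({0, 1} : Finset (Fin 10))ᶜ, v a := rfl
  rw [hS]
  linarith

lemma KY_apply (v : LY) (b : Fin 10) :
    KY i j v b =
      if b = 0 then 3 * v 0 + 4 * v 1 + 2 * v i + 2 * v j + Sv v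
      else if b = 1 then 4 * v 0 + 3 * v 1 + 2 * v i + 2 * v j + Sv v
      else if b = i then -3 * v 0 - 3 * v 1 - 2 * v i - v j - Sv v
      else if b = j then -3 * v 0 - 3 * v 1 - v i - 2 * v j - Sv v
      else -v 0 - v 1 - v i - v j - v b := by
  have hc : ∀ a ∈ ({0, 1, i, j} : Finset (Fin 10))ᶜ,
      v a * ((if a = 0 then
      (3 : ℤ) • bY 0 + (4 : ℤ) • bY 1 - (3 : ℤ) • (bY i + bY j)
        - ∑ k ∈ ({0, 1, i, j} : Finset (Fin 10))ᶜ, bY k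
    else if a = 1 then
      (4 : ℤ) • bY 0 + (3 : ℤ) • bY 1 - (3 : ℤ) • (bY i + bY j)
        - ∑ k ∈ ({0, 1, i, j} : Finset (Fin 10))ᶜ, bY k
    else if a = i then
      (3 : ℤ) • bY 0 + (3 : ℤ) • bY 1 - (3 : ℤ) • bY i - (2 : ℤ) • bY j
        - ∑ k ∈ ({0, 1, i, j} : Finset (Fin 10))ᶜ, bY k
    else if a = j then
      (3 : ℤ) • bY 0 + (3 : ℤ) • bY 1 - (2 : ℤ) • bY i - (3 : ℤ) • bY j
        - ∑ k ∈ ({0, 1, i, j} : Finset (Fin 10))ᶜ, bY k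
    else bY 0 + bY 1 - bY i - bY j - bY a) b)
      = v a * (((if b = 0 then (1:ℤ) else 0) + (if b = 1 then 1 else 0)
          - (if b = i then 1 else 0) - (if b = j then 1 else 0)) - if b = a then 1 else 0) := by
    intro a ha
    simp only [Finset.mem_compl, Finset.mem_insert, Finset.mem_singleton, not_or] at ha
    rw [if_neg ha.1, if_neg ha.2.1, if_neg ha.2.2.1, if_neg ha.2.2.2]
    simp [bY_apply]
  have h01ij : ({0, 1, i, j} : Finset (Fin 10))
      = insert 0 (insert 1 (insert i ({j} : Finset (Fin 10)))) := rfl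
  rw [KY, constr_eval, ← Finset.sum_add_sum_compl ({0, 1, i, j} : Finset (Fin 10)),
    Finset.sum_congr rfl hc, h01ij,
    Finset.sum_insert (by
      simp only [Finset.mem_insert, Finset.mem_singleton, not_or]
      exact ⟨by decide, Ne.symm hi0, Ne.symm hj0⟩),
    Finset.sum_insert (by
      simp only [Finset.mem_insert, Finset.mem_singleton, not_or]
      exact ⟨Ne.symm hi1, Ne.symm hj1⟩),
    Finset.sum_insert (by simp only [Finset.mem_singleton]; exact hij),
    Finset.sum_singleton]
  simp only [if_pos rfl, if_neg (by decide : ¬ (0 : Fin 10) = 1),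
    if_neg (by decide : ¬ (1 : Fin 10) = 0), if_neg hi0, if_neg hi1, if_neg hj0, if_neg hj1,
    if_neg hij, if_neg (Ne.symm hij)]
  simp only [mul_sub, Finset.sum_sub_distrib, sum_mul_ite, ← Finset.sum_mul]
  rw [sum_compl4 hi0 hi1 hj0 hj1 hij]
  rcases eq_or_ne b 0 with rfl | hb0
  · simp [Pi.add_apply, Pi.sub_apply, Pi.smul_apply, smul_eq_mul, bY_apply, sum_compl_eval,
      Ne.symm hi0, Ne.symm hj0]
    ring
  rcases eq_or_ne b 1 with rfl | hb1
  · simp [Pi.add_apply, Pi.sub_apply, Pi.smul_apply, smul_eq_mul, bY_apply, sum_compl_eval,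
      Ne.symm hi1, Ne.symm hj1]
    ring
  rcases eq_or_ne b i with rfl | hbi
  · simp [Pi.add_apply, Pi.sub_apply, Pi.smul_apply, smul_eq_mul, bY_apply, sum_compl_eval,
      hi0, hi1, hij]
    ring
  rcases eq_or_ne b j with rfl | hbj
  · simp [Pi.add_apply, Pi.sub_apply, Pi.smul_apply, smul_eq_mul, bY_apply, sum_compl_eval,
      hj0, hj1, Ne.symm hij]
    ring
  · have hbc : b ∈ ({0, 1, i, j} : Finset (Fin 10))ᶜ := by
      simp only [Finset.mem_compl, Finset.mem_insert, Finset.mem_singleton, not_or]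
      exact ⟨hb0, hb1, hbi, hbj⟩
    have hbc2 : b ∉ ({0, 1, i, j} : Finset (Fin 10)) := Finset.mem_compl.mp hbc
    simp [Pi.add_apply, Pi.sub_apply, Pi.smul_apply, smul_eq_mul, bY_apply, sum_compl_eval,
      hb0, hb1, hbi, hbj, hbc, hbc2]
    ring

lemma Sv_KY (v : LY) :
    Sv (KY i j v) = -12 * v 0 - 12 * v 1 - 8 * v i - 8 * v j - 3 * Sv v := by
  have hsub : ({i, j} : Finset (Fin 10)) ⊆ ({0, 1} : Finset (Fin 10))ᶜ := by
    intro x hx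
    simp only [Finset.mem_insert, Finset.mem_singleton] at hx
    rcases hx with rfl | rfl <;> simp [hi0, hi1, hj0, hj1]
  have h8 : (({0, 1} : Finset (Fin 10))ᶜ).card = 8 := by decide
  have hcard : (({0, 1, i, j} : Finset (Fin 10))ᶜ).card = 6 := by
    rw [compl4_eq (i := i) (j := j), Finset.card_sdiff_of_subset hsub, Finset.card_pair hij, h8]
  have h := Finset.sum_sdiff (f := KY i j v) hsub
  rw [Finset.sum_pair hij, ← compl4_eq (i := i) (j := j)] at h
  have hS : Sv (KY i j v) = ∑ a ∈ ({0, 1} : Finset (Fin 10))ᶜ, KY i j v a := rfl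
  rw [hS, ← h]
  have hc : ∀ a ∈ ({0, 1, i, j} : Finset (Fin 10))ᶜ,
      KY i j v a = -v 0 - v 1 - v i - v j - v a := by
    intro a ha
    simp only [Finset.mem_compl, Finset.mem_insert, Finset.mem_singleton, not_or] at ha
    rw [KY_apply hi0 hi1 hj0 hj1 hij, if_neg ha.1, if_neg ha.2.1, if_neg ha.2.2.1,
      if_neg ha.2.2.2]
  rw [Finset.sum_congr rfl hc]
  have hKi : KY i j v i = -3 * v 0 - 3 * v 1 - 2 * v i - v j - Sv v := by
    rw [KY_apply hi0 hi1 hj0 hj1 hij, if_neg hi0, if_neg hi1, if_pos rfl]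
  have hKj : KY i j v j = -3 * v 0 - 3 * v 1 - v i - 2 * v j - Sv v := by
    rw [KY_apply hi0 hi1 hj0 hj1 hij, if_neg hj0, if_neg hj1, if_neg (Ne.symm hij), if_pos rfl]
  have hsum : ∑ a ∈ ({0, 1, i, j} : Finset (Fin 10))ᶜ, (-v 0 - v 1 - v i - v j - v a)
      = 6 * (-v 0 - v 1 - v i - v j) - (Sv v - v i - v j) := by
    rw [show (fun a => -v 0 - v 1 - v i - v j - v a)
        = (fun a => (-v 0 - v 1 - v i - v j) - v a) from rfl]
    rw [Finset.sum_sub_distrib, Finset.sum_const, hcard, sum_compl4 hi0 hi1 hj0 hj1 hij]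
    push_cast
    ring
  rw [hsum, hKi, hKj]
  ring

end KYlemmas

lemma formY_eval (x v : LY) :
    formY x v = x 0 * v 1 + x 1 * v 0 - ∑ a ∈ ({0,1} : Finset (Fin 10))ᶜ, x a * v a := by
  rw [formY, Matrix.toLinearMap₂'_apply]
  have inner : ∀ a : Fin 10,
      (∑ c, x a • v c • (Matrix.of (fun a b : Fin 10 =>
        if (a = 0 ∧ b = 1) ∨ (a = 1 ∧ b = 0) then (1 : ℤ)
        else if a = b ∧ a ≠ 0 ∧ a ≠ 1 then -1 else 0)) a c)
        = x a * (if a = 0 then v 1 else if a = 1 then v 0 else -v a) := by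
    intro a
    rcases eq_or_ne a 0 with rfl | ha0
    · have hM : ∀ c : Fin 10, (Matrix.of (fun a b : Fin 10 =>
          if (a = 0 ∧ b = 1) ∨ (a = 1 ∧ b = 0) then (1 : ℤ)
          else if a = b ∧ a ≠ 0 ∧ a ≠ 1 then -1 else 0)) 0 c
          = if c = 1 then (1 : ℤ) else 0 := by
        intro c; simp [Matrix.of_apply]
      rw [Finset.sum_congr rfl (fun c _ => by rw [hM c])]
      simp only [smul_eq_mul, mul_ite, mul_one, mul_zero]
      rw [Finset.sum_ite_eq' Finset.univ (1 : Fin 10) (fun c => x 0 * v c)]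
      simp
    rcases eq_or_ne a 1 with rfl | ha1
    · have hM : ∀ c : Fin 10, (Matrix.of (fun a b : Fin 10 =>
          if (a = 0 ∧ b = 1) ∨ (a = 1 ∧ b = 0) then (1 : ℤ)
          else if a = b ∧ a ≠ 0 ∧ a ≠ 1 then -1 else 0)) 1 c
          = if c = 0 then (1 : ℤ) else 0 := by
        intro c; simp [Matrix.of_apply]
      rw [Finset.sum_congr rfl (fun c _ => by rw [hM c])]
      simp only [smul_eq_mul, mul_ite, mul_one, mul_zero]
      rw [Finset.sum_ite_eq' Finset.univ (0 : Fin 10) (fun c => x 1 * v c)]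
      simp
    · have hM : ∀ c : Fin 10, (Matrix.of (fun a b : Fin 10 =>
          if (a = 0 ∧ b = 1) ∨ (a = 1 ∧ b = 0) then (1 : ℤ)
          else if a = b ∧ a ≠ 0 ∧ a ≠ 1 then -1 else 0)) a c
          = if a = c then (-1 : ℤ) else 0 := by
        intro c
        simp [Matrix.of_apply, ha0, ha1]
      rw [Finset.sum_congr rfl (fun c _ => by rw [hM c])]
      rw [if_neg ha0, if_neg ha1]
      simp only [smul_eq_mul, mul_ite, mul_neg_one, mul_zero, mul_neg, mul_one]
      rw [Finset.sum_ite_eq Finset.univ a (fun c => -(x a * v c))]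
      simp
  rw [Finset.sum_congr rfl (fun a _ => inner a)]
  rw [← Finset.sum_add_sum_compl ({0,1} : Finset (Fin 10)),
    Finset.sum_pair (by decide : (0:Fin 10) ≠ 1)]
  have hc : ∀ a ∈ ({0,1} : Finset (Fin 10))ᶜ,
      x a * (if a = 0 then v 1 else if a = 1 then v 0 else -v a) = -(x a * v a) := by
    intro a ha
    simp only [Finset.mem_compl, Finset.mem_insert, Finset.mem_singleton, not_or] at ha
    rw [if_neg ha.1, if_neg ha.2, mul_neg]
  rw [Finset.sum_congr rfl hc, Finset.sum_neg_distrib]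
  simp only [if_pos rfl, if_true, eq_self_iff_true, if_neg (by decide : ¬ (0:Fin 10) = 1),
    if_neg (by decide : ¬ (1:Fin 10) = 0)]
  ring

lemma deltaY_apply (b : Fin 10) :
    deltaY b = if b = 0 then 2 else if b = 1 then 2 else -1 := by
  rcases eq_or_ne b 0 with rfl | hb0
  · simp [deltaY, bY_apply, sum_compl_eval]
  rcases eq_or_ne b 1 with rfl | hb1
  · simp [deltaY, bY_apply, sum_compl_eval]
  · simp [deltaY, Pi.add_apply, Pi.sub_apply, Pi.smul_apply, smul_eq_mul, bY_apply,
      sum_compl_eval, hb0, hb1]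

lemma formD (v : LY) : formY deltaY v = 2 * v 0 + 2 * v 1 + Sv v := by
  rw [formY_eval]
  have hc : ∀ a ∈ ({0,1} : Finset (Fin 10))ᶜ, deltaY a * v a = -v a := by
    intro a ha
    simp only [Finset.mem_compl, Finset.mem_insert, Finset.mem_singleton, not_or] at ha
    rw [deltaY_apply, if_neg ha.1, if_neg ha.2]
    ring
  rw [Finset.sum_congr rfl hc, Finset.sum_neg_distrib]
  rw [deltaY_apply, deltaY_apply]
  have hS : ∑ a ∈ ({0,1} : Finset (Fin 10))ᶜ, v a = Sv v := rfl
  rw [hS]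
  simp only [if_pos rfl, if_true, eq_self_iff_true, if_neg (by decide : ¬ (0:Fin 10) = 1),
    if_neg (by decide : ¬ (1:Fin 10) = 0)]
  ring

lemma formA {i j k l : Fin 10}
    (hi0 : i ≠ 0) (hi1 : i ≠ 1) (hj0 : j ≠ 0) (hj1 : j ≠ 1)
    (hk0 : k ≠ 0) (hk1 : k ≠ 1) (hl0 : l ≠ 0) (hl1 : l ≠ 1) (v : LY) :
    formY (bY 0 + bY 1 - bY i - bY j - bY k - bY l) v
      = v 0 + v 1 + v i + v j + v k + v l := by
  rw [formY_eval]
  have hc : ∀ a ∈ ({0,1} : Finset (Fin 10))ᶜ,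
      (bY 0 + bY 1 - bY i - bY j - bY k - bY l) a * v a
        = -((if a = i then v a else 0) + (if a = j then v a else 0)
            + (if a = k then v a else 0) + (if a = l then v a else 0)) := by
    intro a ha
    simp only [Finset.mem_compl, Finset.mem_insert, Finset.mem_singleton, not_or] at ha
    simp only [Pi.sub_apply, Pi.add_apply, bY_apply, if_neg ha.1, if_neg ha.2]
    split_ifs <;> ring
  rw [Finset.sum_congr rfl hc]
  simp only [Finset.sum_neg_distrib, Finset.sum_add_distrib]
  rw [Finset.sum_ite_eq' _ i v, Finset.sum_ite_eq' _ j v, Finset.sum_ite_eq' _ k v,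
    Finset.sum_ite_eq' _ l v]
  have hmi : i ∈ ({0,1} : Finset (Fin 10))ᶜ := by simp [hi0, hi1]
  have hmj : j ∈ ({0,1} : Finset (Fin 10))ᶜ := by simp [hj0, hj1]
  have hmk : k ∈ ({0,1} : Finset (Fin 10))ᶜ := by simp [hk0, hk1]
  have hml : l ∈ ({0,1} : Finset (Fin 10))ᶜ := by simp [hl0, hl1]
  rw [if_pos hmi, if_pos hmj, if_pos hmk, if_pos hml]
  simp only [Pi.sub_apply, Pi.add_apply, bY_apply]
  simp only [if_pos rfl, if_true, eq_self_iff_true, if_neg (by decide : ¬ (0:Fin 10) = 1),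
    if_neg (by decide : ¬ (1:Fin 10) = 0), if_neg (Ne.symm hi0), if_neg (Ne.symm hj0),
    if_neg (Ne.symm hk0), if_neg (Ne.symm hl0), if_neg (Ne.symm hi1), if_neg (Ne.symm hj1),
    if_neg (Ne.symm hk1), if_neg (Ne.symm hl1)]
  ring

lemma kacY_apply (x v : LY) (b : Fin 10) :
    kacY x v b = v b + formY deltaY v * x b + (formY deltaY v - formY x v) * deltaY b := by
  simp [kacY, LinearMap.add_apply, LinearMap.smulRight_apply, LinearMap.sub_apply,
    Pi.add_apply, Pi.smul_apply, smul_eq_mul]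

end Helpers

/-- `K_{i,j} ∘ s₂ ∘ K_{k,l} ∘ s₁ = K_{i,j} ∘ s₁ ∘ K_{k,l} ∘ s₂`, and this common
composition equals the Kac translation `T_{H₁+H₂-Eᵢ-Eⱼ-Eₖ-Eₗ}` on `L_Y`. -/
theorem KY_switch_compositions_eq_kacY (i j k l : Fin 10)
    (hi0 : i ≠ 0) (hi1 : i ≠ 1) (hj0 : j ≠ 0) (hj1 : j ≠ 1)
    (hk0 : k ≠ 0) (hk1 : k ≠ 1) (hl0 : l ≠ 0) (hl1 : l ≠ 1)
    (hij : i ≠ j) (hik : i ≠ k) (hil : i ≠ l) (hjk : j ≠ k) (hjl : j ≠ l) (hkl : k ≠ l) :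
    KY i j ∘ₗ sw2 ∘ₗ KY k l ∘ₗ sw1 = KY i j ∘ₗ sw1 ∘ₗ KY k l ∘ₗ sw2 ∧
    KY i j ∘ₗ sw2 ∘ₗ KY k l ∘ₗ sw1
      = kacY (bY 0 + bY 1 - bY i - bY j - bY k - bY l) := by
  have main1 : KY i j ∘ₗ sw2 ∘ₗ KY k l ∘ₗ sw1
      = kacY (bY 0 + bY 1 - bY i - bY j - bY k - bY l) := by
    refine LinearMap.ext fun v => funext fun b => ?_
    simp only [LinearMap.comp_apply]
    rw [kacY_apply, formD, formA hi0 hi1 hj0 hj1 hk0 hk1 hl0 hl1, deltaY_apply]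
    simp only [Pi.sub_apply, Pi.add_apply, bY_apply]
    rcases eq_or_ne b 0 with rfl | hb0
    · simp only [sw1_apply, sw2_apply, KY_apply hi0 hi1 hj0 hj1 hij,
        KY_apply hk0 hk1 hl0 hl1 hkl, Sv_sw1, Sv_sw2, Sv_KY hi0 hi1 hj0 hj1 hij,
        Sv_KY hk0 hk1 hl0 hl1 hkl,
        hi0, hi1, hj0, hj1, hk0, hk1, hl0, hl1, hij, hik, hil, hjk, hjl, hkl,
        Ne.symm hij, Ne.symm hik, Ne.symm hil, Ne.symm hjk, Ne.symm hjl, Ne.symm hkl,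
        Ne.symm hi0, Ne.symm hi1, Ne.symm hj0, Ne.symm hj1, Ne.symm hk0, Ne.symm hk1,
        Ne.symm hl0, Ne.symm hl1,
        if_true, if_false, eq_self_iff_true, ite_true, ite_false,
        if_neg (by decide : ¬ (0 : Fin 10) = 1), if_neg (by decide : ¬ (1 : Fin 10) = 0),
        if_pos rfl]
      ring
    rcases eq_or_ne b 1 with rfl | hb1
    · simp only [sw1_apply, sw2_apply, KY_apply hi0 hi1 hj0 hj1 hij,
        KY_apply hk0 hk1 hl0 hl1 hkl, Sv_sw1, Sv_sw2, Sv_KY hi0 hi1 hj0 hj1 hij,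
        Sv_KY hk0 hk1 hl0 hl1 hkl,
        hi0, hi1, hj0, hj1, hk0, hk1, hl0, hl1, hij, hik, hil, hjk, hjl, hkl,
        Ne.symm hij, Ne.symm hik, Ne.symm hil, Ne.symm hjk, Ne.symm hjl, Ne.symm hkl,
        Ne.symm hi0, Ne.symm hi1, Ne.symm hj0, Ne.symm hj1, Ne.symm hk0, Ne.symm hk1,
        Ne.symm hl0, Ne.symm hl1,
        if_true, if_false, eq_self_iff_true, ite_true, ite_false,
        if_neg (by decide : ¬ (0 : Fin 10) = 1), if_neg (by decide : ¬ (1 : Fin 10) = 0),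
        if_pos rfl, hb0]
      ring
    rcases eq_or_ne b i with rfl | hbi
    · simp only [sw1_apply, sw2_apply, KY_apply hi0 hi1 hj0 hj1 hij,
        KY_apply hk0 hk1 hl0 hl1 hkl, Sv_sw1, Sv_sw2, Sv_KY hi0 hi1 hj0 hj1 hij,
        Sv_KY hk0 hk1 hl0 hl1 hkl,
        hi0, hi1, hj0, hj1, hk0, hk1, hl0, hl1, hij, hik, hil, hjk, hjl, hkl,
        Ne.symm hij, Ne.symm hik, Ne.symm hil, Ne.symm hjk, Ne.symm hjl, Ne.symm hkl,
        Ne.symm hi0, Ne.symm hi1, Ne.symm hj0, Ne.symm hj1, Ne.symm hk0, Ne.symm hk1,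
        Ne.symm hl0, Ne.symm hl1,
        if_true, if_false, eq_self_iff_true, ite_true, ite_false,
        if_neg (by decide : ¬ (0 : Fin 10) = 1), if_neg (by decide : ¬ (1 : Fin 10) = 0),
        if_pos rfl, hb0, hb1]
      ring
    rcases eq_or_ne b j with rfl | hbj
    · simp only [sw1_apply, sw2_apply, KY_apply hi0 hi1 hj0 hj1 hij,
        KY_apply hk0 hk1 hl0 hl1 hkl, Sv_sw1, Sv_sw2, Sv_KY hi0 hi1 hj0 hj1 hij,
        Sv_KY hk0 hk1 hl0 hl1 hkl,
        hi0, hi1, hj0, hj1, hk0, hk1, hl0, hl1, hij, hik, hil, hjk, hjl, hkl,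
        Ne.symm hij, Ne.symm hik, Ne.symm hil, Ne.symm hjk, Ne.symm hjl, Ne.symm hkl,
        Ne.symm hi0, Ne.symm hi1, Ne.symm hj0, Ne.symm hj1, Ne.symm hk0, Ne.symm hk1,
        Ne.symm hl0, Ne.symm hl1,
        if_true, if_false, eq_self_iff_true, ite_true, ite_false,
        if_neg (by decide : ¬ (0 : Fin 10) = 1), if_neg (by decide : ¬ (1 : Fin 10) = 0),
        if_pos rfl, hb0, hb1, hbi]
      ring
    rcases eq_or_ne b k with rfl | hbk
    · simp only [sw1_apply, sw2_apply, KY_apply hi0 hi1 hj0 hj1 hij,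
        KY_apply hk0 hk1 hl0 hl1 hkl, Sv_sw1, Sv_sw2, Sv_KY hi0 hi1 hj0 hj1 hij,
        Sv_KY hk0 hk1 hl0 hl1 hkl,
        hi0, hi1, hj0, hj1, hk0, hk1, hl0, hl1, hij, hik, hil, hjk, hjl, hkl,
        Ne.symm hij, Ne.symm hik, Ne.symm hil, Ne.symm hjk, Ne.symm hjl, Ne.symm hkl,
        Ne.symm hi0, Ne.symm hi1, Ne.symm hj0, Ne.symm hj1, Ne.symm hk0, Ne.symm hk1,
        Ne.symm hl0, Ne.symm hl1,
        if_true, if_false, eq_self_iff_true, ite_true, ite_false,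
        if_neg (by decide : ¬ (0 : Fin 10) = 1), if_neg (by decide : ¬ (1 : Fin 10) = 0),
        if_pos rfl, hb0, hb1, hbi, hbj]
      ring
    rcases eq_or_ne b l with rfl | hbl
    · simp only [sw1_apply, sw2_apply, KY_apply hi0 hi1 hj0 hj1 hij,
        KY_apply hk0 hk1 hl0 hl1 hkl, Sv_sw1, Sv_sw2, Sv_KY hi0 hi1 hj0 hj1 hij,
        Sv_KY hk0 hk1 hl0 hl1 hkl,
        hi0, hi1, hj0, hj1, hk0, hk1, hl0, hl1, hij, hik, hil, hjk, hjl, hkl,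
        Ne.symm hij, Ne.symm hik, Ne.symm hil, Ne.symm hjk, Ne.symm hjl, Ne.symm hkl,
        Ne.symm hi0, Ne.symm hi1, Ne.symm hj0, Ne.symm hj1, Ne.symm hk0, Ne.symm hk1,
        Ne.symm hl0, Ne.symm hl1,
        if_true, if_false, eq_self_iff_true, ite_true, ite_false,
        if_neg (by decide : ¬ (0 : Fin 10) = 1), if_neg (by decide : ¬ (1 : Fin 10) = 0),
        if_pos rfl, hb0, hb1, hbi, hbj, hbk]
      ring
    · simp only [sw1_apply, sw2_apply, KY_apply hi0 hi1 hj0 hj1 hij,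
        KY_apply hk0 hk1 hl0 hl1 hkl, Sv_sw1, Sv_sw2, Sv_KY hi0 hi1 hj0 hj1 hij,
        Sv_KY hk0 hk1 hl0 hl1 hkl,
        hi0, hi1, hj0, hj1, hk0, hk1, hl0, hl1, hij, hik, hil, hjk, hjl, hkl,
        Ne.symm hij, Ne.symm hik, Ne.symm hil, Ne.symm hjk, Ne.symm hjl, Ne.symm hkl,
        Ne.symm hi0, Ne.symm hi1, Ne.symm hj0, Ne.symm hj1, Ne.symm hk0, Ne.symm hk1,
        Ne.symm hl0, Ne.symm hl1,
        if_true, if_false, eq_self_iff_true, ite_true, ite_false,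
        if_neg (by decide : ¬ (0 : Fin 10) = 1), if_neg (by decide : ¬ (1 : Fin 10) = 0),
        if_pos rfl, hb0, hb1, hbi, hbj, hbk, hbl]
      ring
  have main2 : KY i j ∘ₗ sw1 ∘ₗ KY k l ∘ₗ sw2
      = kacY (bY 0 + bY 1 - bY i - bY j - bY k - bY l) := by
    refine LinearMap.ext fun v => funext fun b => ?_
    simp only [LinearMap.comp_apply]
    rw [kacY_apply, formD, formA hi0 hi1 hj0 hj1 hk0 hk1 hl0 hl1, deltaY_apply]
    simp only [Pi.sub_apply, Pi.add_apply, bY_apply]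
    rcases eq_or_ne b 0 with rfl | hb0
    · simp only [sw1_apply, sw2_apply, KY_apply hi0 hi1 hj0 hj1 hij,
        KY_apply hk0 hk1 hl0 hl1 hkl, Sv_sw1, Sv_sw2, Sv_KY hi0 hi1 hj0 hj1 hij,
        Sv_KY hk0 hk1 hl0 hl1 hkl,
        hi0, hi1, hj0, hj1, hk0, hk1, hl0, hl1, hij, hik, hil, hjk, hjl, hkl,
        Ne.symm hij, Ne.symm hik, Ne.symm hil, Ne.symm hjk, Ne.symm hjl, Ne.symm hkl,
        Ne.symm hi0, Ne.symm hi1, Ne.symm hj0, Ne.symm hj1, Ne.symm hk0, Ne.symm hk1,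
        Ne.symm hl0, Ne.symm hl1,
        if_true, if_false, eq_self_iff_true, ite_true, ite_false,
        if_neg (by decide : ¬ (0 : Fin 10) = 1), if_neg (by decide : ¬ (1 : Fin 10) = 0),
        if_pos rfl]
      ring
    rcases eq_or_ne b 1 with rfl | hb1
    · simp only [sw1_apply, sw2_apply, KY_apply hi0 hi1 hj0 hj1 hij,
        KY_apply hk0 hk1 hl0 hl1 hkl, Sv_sw1, Sv_sw2, Sv_KY hi0 hi1 hj0 hj1 hij,
        Sv_KY hk0 hk1 hl0 hl1 hkl,
        hi0, hi1, hj0, hj1, hk0, hk1, hl0, hl1, hij, hik, hil, hjk, hjl, hkl,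
        Ne.symm hij, Ne.symm hik, Ne.symm hil, Ne.symm hjk, Ne.symm hjl, Ne.symm hkl,
        Ne.symm hi0, Ne.symm hi1, Ne.symm hj0, Ne.symm hj1, Ne.symm hk0, Ne.symm hk1,
        Ne.symm hl0, Ne.symm hl1,
        if_true, if_false, eq_self_iff_true, ite_true, ite_false,
        if_neg (by decide : ¬ (0 : Fin 10) = 1), if_neg (by decide : ¬ (1 : Fin 10) = 0),
        if_pos rfl, hb0]
      ring
    rcases eq_or_ne b i with rfl | hbi
    · simp only [sw1_apply, sw2_apply, KY_apply hi0 hi1 hj0 hj1 hij,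
        KY_apply hk0 hk1 hl0 hl1 hkl, Sv_sw1, Sv_sw2, Sv_KY hi0 hi1 hj0 hj1 hij,
        Sv_KY hk0 hk1 hl0 hl1 hkl,
        hi0, hi1, hj0, hj1, hk0, hk1, hl0, hl1, hij, hik, hil, hjk, hjl, hkl,
        Ne.symm hij, Ne.symm hik, Ne.symm hil, Ne.symm hjk, Ne.symm hjl, Ne.symm hkl,
        Ne.symm hi0, Ne.symm hi1, Ne.symm hj0, Ne.symm hj1, Ne.symm hk0, Ne.symm hk1,
        Ne.symm hl0, Ne.symm hl1,
        if_true, if_false, eq_self_iff_true, ite_true, ite_false,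
        if_neg (by decide : ¬ (0 : Fin 10) = 1), if_neg (by decide : ¬ (1 : Fin 10) = 0),
        if_pos rfl, hb0, hb1]
      ring
    rcases eq_or_ne b j with rfl | hbj
    · simp only [sw1_apply, sw2_apply, KY_apply hi0 hi1 hj0 hj1 hij,
        KY_apply hk0 hk1 hl0 hl1 hkl, Sv_sw1, Sv_sw2, Sv_KY hi0 hi1 hj0 hj1 hij,
        Sv_KY hk0 hk1 hl0 hl1 hkl,
        hi0, hi1, hj0, hj1, hk0, hk1, hl0, hl1, hij, hik, hil, hjk, hjl, hkl,
        Ne.symm hij, Ne.symm hik, Ne.symm hil, Ne.symm hjk, Ne.symm hjl, Ne.symm hkl,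
        Ne.symm hi0, Ne.symm hi1, Ne.symm hj0, Ne.symm hj1, Ne.symm hk0, Ne.symm hk1,
        Ne.symm hl0, Ne.symm hl1,
        if_true, if_false, eq_self_iff_true, ite_true, ite_false,
        if_neg (by decide : ¬ (0 : Fin 10) = 1), if_neg (by decide : ¬ (1 : Fin 10) = 0),
        if_pos rfl, hb0, hb1, hbi]
      ring
    rcases eq_or_ne b k with rfl | hbk
    · simp only [sw1_apply, sw2_apply, KY_apply hi0 hi1 hj0 hj1 hij,
        KY_apply hk0 hk1 hl0 hl1 hkl, Sv_sw1, Sv_sw2, Sv_KY hi0 hi1 hj0 hj1 hij,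
        Sv_KY hk0 hk1 hl0 hl1 hkl,
        hi0, hi1, hj0, hj1, hk0, hk1, hl0, hl1, hij, hik, hil, hjk, hjl, hkl,
        Ne.symm hij, Ne.symm hik, Ne.symm hil, Ne.symm hjk, Ne.symm hjl, Ne.symm hkl,
        Ne.symm hi0, Ne.symm hi1, Ne.symm hj0, Ne.symm hj1, Ne.symm hk0, Ne.symm hk1,
        Ne.symm hl0, Ne.symm hl1,
        if_true, if_false, eq_self_iff_true, ite_true, ite_false,
        if_neg (by decide : ¬ (0 : Fin 10) = 1), if_neg (by decide : ¬ (1 : Fin 10) = 0),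
        if_pos rfl, hb0, hb1, hbi, hbj]
      ring
    rcases eq_or_ne b l with rfl | hbl
    · simp only [sw1_apply, sw2_apply, KY_apply hi0 hi1 hj0 hj1 hij,
        KY_apply hk0 hk1 hl0 hl1 hkl, Sv_sw1, Sv_sw2, Sv_KY hi0 hi1 hj0 hj1 hij,
        Sv_KY hk0 hk1 hl0 hl1 hkl,
        hi0, hi1, hj0, hj1, hk0, hk1, hl0, hl1, hij, hik, hil, hjk, hjl, hkl,
        Ne.symm hij, Ne.symm hik, Ne.symm hil, Ne.symm hjk, Ne.symm hjl, Ne.symm hkl,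
        Ne.symm hi0, Ne.symm hi1, Ne.symm hj0, Ne.symm hj1, Ne.symm hk0, Ne.symm hk1,
        Ne.symm hl0, Ne.symm hl1,
        if_true, if_false, eq_self_iff_true, ite_true, ite_false,
        if_neg (by decide : ¬ (0 : Fin 10) = 1), if_neg (by decide : ¬ (1 : Fin 10) = 0),
        if_pos rfl, hb0, hb1, hbi, hbj, hbk]
      ring
    · simp only [sw1_apply, sw2_apply, KY_apply hi0 hi1 hj0 hj1 hij,
        KY_apply hk0 hk1 hl0 hl1 hkl, Sv_sw1, Sv_sw2, Sv_KY hi0 hi1 hj0 hj1 hij,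
        Sv_KY hk0 hk1 hl0 hl1 hkl,
        hi0, hi1, hj0, hj1, hk0, hk1, hl0, hl1, hij, hik, hil, hjk, hjl, hkl,
        Ne.symm hij, Ne.symm hik, Ne.symm hil, Ne.symm hjk, Ne.symm hjl, Ne.symm hkl,
        Ne.symm hi0, Ne.symm hi1, Ne.symm hj0, Ne.symm hj1, Ne.symm hk0, Ne.symm hk1,
        Ne.symm hl0, Ne.symm hl1,
        if_true, if_false, eq_self_iff_true, ite_true, ite_false,
        if_neg (by decide : ¬ (0 : Fin 10) = 1), if_neg (by decide : ¬ (1 : Fin 10) = 0),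
        if_pos rfl, hb0, hb1, hbi, hbj, hbk, hbl]
      ring
  exact ⟨main1.trans main2.symm, main1⟩
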